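/- For a 1-bit quantization of the linear phase profile, i.e., replacing β(x) = −k·A*·x by its nearest value in {0, π}, the resulting response integral ∫_{−L/2}^{L/2} exp(i·q(β(x)))·exp(i·k·A*·x) dx has absolute value strictly less than L whenever k·A*·L/2 ≥ π, where q maps a phase to its nearest point of {0, π} mod 2π. -/

import Mathlib

/-!
Quantizing the phase only multiplies the phasor `e^{iθ}`, `θ = kAx`, by the sign of `cos θ`.
The integrand is therefore conjugate-symmetric in `x`, so its integral over `[-L/2, L/2]` is
real and equals `∫ |cos (kAx)| dx`, which falls short of `L` because `|cos| < 1` away from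
the multiples of `π`.
-/

/-- 1-bit quantizer: rounds a phase (mod 2π) to the nearest point of {0, π}
(ties broken towards 0); a phase is within π/2 of a multiple of 2π iff its
cosine is nonnegative. -/
noncomputable def quant1bit (β : ℝ) : ℝ := if 0 ≤ Real.cos β then 0 else Real.pi

open Complex ComplexConjugate MeasureTheory

lemma quant1bit_neg (θ : ℝ) : quant1bit (-θ) = quant1bit θ := by
  rw [quant1bit, quant1bit, Real.cos_neg]

lemma exp_I_mul_quant1bit (θ : ℝ) :
    exp (I * quant1bit θ) = ((if 0 ≤ Real.cos θ then 1 else -1 : ℝ) : ℂ) := by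
  unfold quant1bit
  split_ifs <;> simp [mul_comm I, exp_pi_mul_I]

noncomputable def quantizedPhasor (θ : ℝ) : ℂ := exp (I * quant1bit (-θ)) * exp (I * θ)

lemma quantizedPhasor_eq (θ : ℝ) :
    quantizedPhasor θ = ((if 0 ≤ Real.cos θ then 1 else -1 : ℝ) : ℂ) * exp (θ * I) := by
  rw [quantizedPhasor, quant1bit_neg, exp_I_mul_quant1bit, mul_comm I]

lemma quantizedPhasor_neg (θ : ℝ) : quantizedPhasor (-θ) = conj (quantizedPhasor θ) := by
  rw [quantizedPhasor_eq, quantizedPhasor_eq, Real.cos_neg, map_mul, conj_ofReal, ← exp_conj]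
  simp

lemma re_quantizedPhasor (θ : ℝ) : (quantizedPhasor θ).re = |Real.cos θ| := by
  rw [quantizedPhasor_eq, re_ofReal_mul, exp_ofReal_mul_I_re]
  split_ifs with h
  · rw [abs_of_nonneg h, one_mul]
  · rw [abs_of_neg (not_le.mp h), neg_one_mul]

lemma norm_quantizedPhasor (θ : ℝ) : ‖quantizedPhasor θ‖ = 1 := by
  rw [quantizedPhasor_eq, norm_mul, norm_exp_ofReal_mul_I, mul_one, norm_real]
  split_ifs <;> simp

@[fun_prop]
lemma measurable_quant1bit : Measurable quant1bit :=
  Measurable.ite (measurableSet_le measurable_const Real.measurable_cos) measurable_const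
    measurable_const

lemma measurable_quantizedPhasor : Measurable quantizedPhasor := by
  unfold quantizedPhasor
  fun_prop

lemma intervalIntegrable_quantizedPhasor_mul (c a b : ℝ) :
    IntervalIntegrable (fun x ↦ quantizedPhasor (c * x)) volume a b := by
  rw [intervalIntegrable_iff]
  refine Measure.integrableOn_of_bounded (M := 1) measure_Ioc_lt_top.ne ?_ ?_
  · exact (measurable_quantizedPhasor.comp (measurable_const_mul c)).aestronglyMeasurable
  · exact ae_of_all _ fun x ↦ (norm_quantizedPhasor _).le

theorem intervalIntegral.im_integral_eq_zero_of_conj {f : ℝ → ℂ} (a : ℝ)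
    (hf : ∀ x, f (-x) = conj (f x)) : (∫ x in -a..a, f x).im = 0 := by
  refine conj_eq_iff_im.mp ?_
  calc conj (∫ x in -a..a, f x) = ∫ x in -a..a, conj (f x) :=
        intervalIntegral.intervalIntegral_conj.symm
    _ = ∫ x in -a..a, f (-x) := by simp_rw [hf]
    _ = ∫ x in -a..a, f x := by rw [intervalIntegral.integral_comp_neg, neg_neg]

lemma abs_cos_lt_one_of_pos_of_lt_pi {y : ℝ} (h0 : 0 < y) (hπ : y < Real.pi) :
    |Real.cos y| < 1 := by
  have hsin := Real.sin_pos_of_pos_of_lt_pi h0 hπ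
  rw [← sq_lt_one_iff_abs_lt_one]
  nlinarith [Real.sin_sq_add_cos_sq y]

theorem integral_abs_cos_mul_lt {c a : ℝ} (hc : c ≠ 0) (ha : 0 < a) :
    ∫ x in -a..a, |Real.cos (c * x)| < 2 * a := by
  have hcont : Continuous fun x ↦ |Real.cos (c * x)| := by fun_prop
  set x₀ := min (a / 2) (Real.pi / (2 * |c|))
  have hx₀ : 0 < x₀ := by positivity
  have hcx₀ : |c * x₀| < Real.pi := by
    rw [abs_mul, abs_of_pos hx₀]
    calc |c| * x₀ ≤ |c| * (Real.pi / (2 * |c|)) := by gcongr; exact min_le_right _ _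
      _ < Real.pi := by field_simp; linarith [Real.pi_pos]
  calc ∫ x in -a..a, |Real.cos (c * x)| < ∫ _ in -a..a, (1 : ℝ) := by
        refine intervalIntegral.integral_lt_integral_of_continuousOn_of_le_of_exists_lt
          (by linarith) hcont.continuousOn continuousOn_const
          (fun x _ ↦ Real.abs_cos_le_one _) ⟨x₀, ⟨by linarith, ?_⟩, ?_⟩
        · linarith [min_le_left (a / 2) (Real.pi / (2 * |c|))]
        · rw [← Real.cos_abs]
          exact abs_cos_lt_one_of_pos_of_lt_pi (by positivity) hcx₀
    _ = 2 * a := by rw [intervalIntegral.integral_const, smul_eq_mul, mul_one]; ring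

theorem one_bit_quantization_loss_general (k A L : ℝ)
    (hk : 0 < k) (hA : 0 < A) (hL : 0 < L) :
    ‖(∫ x in (-L/2)..(L/2),
        Complex.exp (Complex.I * quant1bit (-(k * A * x)))
          * Complex.exp (Complex.I * (k * A * x)))‖ < L := by
  simp_rw [← ofReal_mul]
  change ‖∫ x in (-L/2)..(L/2), quantizedPhasor (k * A * x)‖ < L
  have him : (∫ x in -(L/2)..(L/2), quantizedPhasor (k * A * x)).im = 0 :=
    intervalIntegral.im_integral_eq_zero_of_conj _ fun x ↦ by rw [mul_neg, quantizedPhasor_neg]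
  rw [neg_div, ← abs_re_eq_norm.mpr him, ← RCLike.re_to_complex,
    ← intervalIntegral.intervalIntegral_re (intervalIntegrable_quantizedPhasor_mul _ _ _)]
  simp_rw [RCLike.re_to_complex, re_quantizedPhasor]
  rw [abs_of_nonneg (intervalIntegral.integral_nonneg (by linarith) fun _ _ ↦ abs_nonneg _)]
  exact (integral_abs_cos_mul_lt (by positivity) (half_pos hL)).trans_eq (by ring)

theorem one_bit_quantization_loss (k A L : ℝ)
    (hk : 0 < k) (hA : 0 < A) (hL : 0 < L)
    (hmain : Real.pi ≤ k * A * L / 2) :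
    ‖(∫ x in (-L/2)..(L/2),
        Complex.exp (Complex.I * quant1bit (-(k * A * x)))
          * Complex.exp (Complex.I * (k * A * x)))‖ < L :=
  one_bit_quantization_loss_general k A L hk hA hL
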